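/- arXiv:1505.00440 — 8 statements merged into one kernel-verified Lean document; each statement's English description precedes it below -/
import Mathlib

section
/- For every natural number n ≥ 1, the alternating binomial sum ∑_{k=1}^{n} (-1)^k C(n,k)/k² equals -∑_{k=1}^{n} H_k/k, where H_k = ∑_{j=1}^{k} 1/j is the k-th harmonic number. -/
/-!
Let `S m n = ∑_{k=1}^n (-1)^k C(n,k) / k^m` (`altChooseSum m n`). Since `C(n,k-1) = k C(n+1,k) / (n+1)`, Pascal's rule
gives `S (m+1) (n+1) - S (m+1) n = S m (n+1) / (n+1)`, so `S (m+1) n = ∑_{k=1}^n S m k / k`.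
Starting from `S 0 n = -1` (the binomial theorem at `-1`), one step gives `S 1 = -H` and a
second one gives `S 2 n = -∑_{k=1}^n H k / k`.
-/

open Finset

/-- The k-th harmonic number. -/
noncomputable def H (k : ℕ) : ℝ := ∑ j ∈ Finset.Icc 1 k, (1 : ℝ) / j

noncomputable def altChooseSum (m n : ℕ) : ℝ :=
  ∑ k ∈ Icc 1 n, (-1 : ℝ) ^ k * n.choose k / (k : ℝ) ^ m

lemma cast_choose_succ_eq (n k : ℕ) :
    ((n + 1).choose k : ℝ) = n.choose k + k * (n + 1).choose k / (n + 1) := by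
  rcases le_or_gt k (n + 1) with hk | hk
  · have h := Nat.choose_mul_succ_eq n k
    rw [← Nat.cast_inj (R := ℝ)] at h
    push_cast [hk] at h
    field_simp
    linarith
  · simp [Nat.choose_eq_zero_of_lt hk, Nat.choose_eq_zero_of_lt (by omega : n < k)]

lemma sum_Icc_alternating_choose {n : ℕ} (hn : n ≠ 0) :
    ∑ k ∈ Icc 1 n, (-1 : ℝ) ^ k * n.choose k = -1 := by
  have h := Int.alternating_sum_range_choose_of_ne hn
  rw [range_eq_Ico, sum_eq_sum_Ico_succ_bot (by omega), Ico_add_one_right_eq_Icc] at h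
  have h' := congrArg (Int.cast : ℤ → ℝ) h
  push_cast at h'
  simp only [Nat.choose_zero_right, Nat.cast_one, mul_one] at h'
  linarith

lemma altChooseSum_zero_left {n : ℕ} (hn : n ≠ 0) : altChooseSum 0 n = -1 := by
  simpa [altChooseSum] using sum_Icc_alternating_choose hn

lemma altChooseSum_succ_succ (m n : ℕ) :
    altChooseSum (m + 1) (n + 1) = altChooseSum (m + 1) n + altChooseSum m (n + 1) / (n + 1) := by
  have hterm : ∀ k ∈ Icc 1 (n + 1), (-1 : ℝ) ^ k * (n + 1).choose k / (k : ℝ) ^ (m + 1) =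
      (-1 : ℝ) ^ k * n.choose k / (k : ℝ) ^ (m + 1) +
        (-1 : ℝ) ^ k * (n + 1).choose k / (k : ℝ) ^ m / (n + 1) := by
    intro k hk
    have hk0 : (k : ℝ) ≠ 0 := by simp at hk ⊢; omega
    conv_lhs => rw [cast_choose_succ_eq n k]
    field_simp
    ring
  simp only [altChooseSum]
  rw [sum_congr rfl hterm, sum_add_distrib, ← sum_div, sum_Icc_succ_top (by omega : 1 ≤ n + 1)]
  simp [Nat.choose_succ_self]

lemma altChooseSum_succ_left (m n : ℕ) :
    altChooseSum (m + 1) n = ∑ k ∈ Icc 1 n, altChooseSum m k / k := by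
  induction n with
  | zero => simp [altChooseSum]
  | succ n ih =>
    rw [altChooseSum_succ_succ, ih, sum_Icc_succ_top (by omega : 1 ≤ n + 1)]
    push_cast
    ring

lemma altChooseSum_one_left (n : ℕ) : altChooseSum 1 n = -H n := by
  rw [altChooseSum_succ_left, H, ← sum_neg_distrib]
  refine sum_congr rfl fun k hk => ?_
  rw [altChooseSum_zero_left (by simp at hk; omega)]
  ring

theorem stmt_0_general (n : ℕ) :
    ∑ k ∈ Finset.Icc 1 n, (-1 : ℝ) ^ k * (n.choose k) / (k : ℝ) ^ 2 =
      - ∑ k ∈ Finset.Icc 1 n, H k / k := by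
  rw [← altChooseSum, altChooseSum_succ_left, ← sum_neg_distrib]
  simp only [altChooseSum_one_left, neg_div]

theorem stmt_0 (n : ℕ) (hn : 1 ≤ n) :
    ∑ k ∈ Finset.Icc 1 n, (-1 : ℝ) ^ k * (n.choose k) / (k : ℝ) ^ 2 =
      - ∑ k ∈ Finset.Icc 1 n, H k / k :=
  stmt_0_general n
end

section
/- For every natural number m ≥ 1, ∫_0^1 (1/x) ∫_0^x (1/y) ∫_0^y (1/z) [(x-y)^m - (x-y+z)^m] dz dy dx = -(1/m) ∑_{k=1}^{m} 1/k², where each inner integrand extends continuously (it is a polynomial divided by the corresponding variable with the singularity removable). -/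
/-!
Write `m = n + 1`. By the binomial theorem, `(x - y) ^ m - (x - y + z) ^ m` is `z` times the
polynomial `-∑_{i + j = n} C(m, i) (x - y) ^ i z ^ j`, so the innermost integral is
`-∑_{i + j = n} C(m, i) (x - y) ^ i y ^ (j + 1) / (j + 1)`. This is again divisible by `y`,
and the Beta integral `∫₀ˣ (x - y) ^ i y ^ j dy = x ^ (i + j + 1) i! j! / (i + j + 1)!` turns
the term `(i, j)` of the middle integral into `x ^ m / (j + 1) ^ 2`. The outer integral of
`x ^ (m - 1)` contributes the factor `1 / m`.
-/

open intervalIntegral Finset Nat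

theorem integral_one_div_mul_of_eq_mul {f g : ℝ → ℝ} (hfg : ∀ t ≠ 0, f t = t * g t)
    (a b : ℝ) :
    ∫ t in a..b, 1 / t * f t = ∫ t in a..b, g t :=
  integral_congr_ae <| (MeasureTheory.volume.ae_ne 0).mono fun t ht _ ↦ by
    rw [hfg t ht, one_div, inv_mul_cancel_left₀ ht]

theorem integral_sub_pow_mul_pow (x : ℝ) (n k : ℕ) :
    ∫ y in (0 : ℝ)..x, (x - y) ^ n * y ^ k = x ^ (n + k + 1) * (n ! * k !) / (n + k + 1)! := by
  induction n generalizing k with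
  | zero =>
    simp only [pow_zero, one_mul, integral_pow, zero_add, factorial_zero, cast_one]
    rw [factorial_succ]
    push_cast
    field_simp
    ring
  | succ n ih =>
    have hu : ∀ y ∈ Set.uIcc 0 x,
        HasDerivAt (fun y ↦ (x - y) ^ (n + 1)) (-((n + 1 : ℝ) * (x - y) ^ n)) y := fun y _ ↦
      (((hasDerivAt_id y).const_sub x).pow (n + 1)).congr_deriv (by simp)
    have hv : ∀ y ∈ Set.uIcc 0 x,
        HasDerivAt (fun y ↦ y ^ (k + 1) / (k + 1 : ℝ)) (y ^ k) y := fun y _ ↦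
      ((hasDerivAt_pow (k + 1) y).div_const (k + 1 : ℝ)).congr_deriv (by push_cast; field_simp)
    rw [integral_mul_deriv_eq_deriv_mul hu hv (Continuous.intervalIntegrable (by fun_prop) _ _)
      (Continuous.intervalIntegrable (by fun_prop) _ _)]
    have hrest : ∫ y in (0 : ℝ)..x, -((n + 1 : ℝ) * (x - y) ^ n) * (y ^ (k + 1) / (k + 1)) =
        -((n + 1) / (k + 1)) * ∫ y in (0 : ℝ)..x, (x - y) ^ n * y ^ (k + 1) := by
      rw [← integral_const_mul]
      congr 1 with y
      ring
    rw [hrest, ih, show n + (k + 1) + 1 = n + 1 + k + 1 by ring, factorial_succ n,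
      factorial_succ k]
    simp only [sub_self, zero_pow (succ_ne_zero n), zero_mul, sub_zero, zero_sub]
    push_cast
    field_simp
    ring

theorem sub_add_pow_succ {R : Type*} [CommRing R] (a z : R) (n : ℕ) :
    a ^ (n + 1) - (a + z) ^ (n + 1) =
      z * -∑ p ∈ antidiagonal n, ((n + 1).choose p.1 : R) * a ^ p.1 * z ^ p.2 := by
  rw [(Commute.all a z).add_pow', Nat.sum_antidiagonal_succ', choose_self, one_smul, pow_zero,
    mul_one, sub_add_cancel_left, mul_neg, mul_sum]
  refine congrArg _ (sum_congr rfl fun p _ ↦ ?_)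
  rw [nsmul_eq_mul, pow_succ]
  ring

theorem integral_one_div_mul_pow_sub_add_pow (a y : ℝ) (n : ℕ) :
    ∫ z in (0 : ℝ)..y, 1 / z * (a ^ (n + 1) - (a + z) ^ (n + 1)) =
      -∑ p ∈ antidiagonal n,
        ((n + 1).choose p.1 : ℝ) * a ^ p.1 * (y ^ (p.2 + 1) / (p.2 + 1)) := by
  rw [integral_one_div_mul_of_eq_mul (fun z _ ↦ sub_add_pow_succ a z n), integral_neg,
    integral_finsetSum fun _ _ ↦ Continuous.intervalIntegrable (by fun_prop) _ _]
  simp [integral_const_mul, integral_pow]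

theorem add_succ_choose_div_mul_factorial_div (i j : ℕ) :
    ((i + j + 1).choose i : ℝ) / (j + 1) * (i ! * j ! / (i + j + 1)!) = 1 / (j + 1) ^ 2 := by
  have h := congrArg (Nat.cast (R := ℝ)) (add_choose_mul_factorial_mul_factorial (j + 1) i)
  rw [factorial_succ j, show j + 1 + i = i + j + 1 by ring] at h
  push_cast at h
  field_simp
  linear_combination h

theorem sum_antidiagonal_comp_snd_succ {M : Type*} [AddCommMonoid M] (f : ℕ → M) (n : ℕ) :
    ∑ p ∈ antidiagonal n, f (p.2 + 1) = ∑ k ∈ Icc 1 (n + 1), f k := by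
  rw [← Nat.sum_antidiagonal_swap]
  simp only [Prod.snd_swap]
  rw [Nat.sum_antidiagonal_eq_sum_range_succ_mk, range_eq_Ico, sum_Ico_add']
  rfl

theorem integral_one_div_mul_neg_sum_choose (x : ℝ) (n : ℕ) :
    ∫ y in (0 : ℝ)..x, 1 / y * -∑ p ∈ antidiagonal n,
        ((n + 1).choose p.1 : ℝ) * (x - y) ^ p.1 * (y ^ (p.2 + 1) / (p.2 + 1)) =
      -(∑ k ∈ Icc 1 (n + 1), 1 / (k : ℝ) ^ 2) * x ^ (n + 1) := by
  have hfactor (y : ℝ) :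
      -∑ p ∈ antidiagonal n,
          ((n + 1).choose p.1 : ℝ) * (x - y) ^ p.1 * (y ^ (p.2 + 1) / (p.2 + 1)) =
        y * -∑ p ∈ antidiagonal n,
          ((n + 1).choose p.1 : ℝ) / (p.2 + 1) * ((x - y) ^ p.1 * y ^ p.2) := by
    rw [mul_neg, mul_sum]
    exact congrArg _ (sum_congr rfl fun p _ ↦ by ring)
  rw [← sum_antidiagonal_comp_snd_succ, integral_one_div_mul_of_eq_mul fun y _ ↦ hfactor y,
    integral_neg, integral_finsetSum fun _ _ ↦ Continuous.intervalIntegrable (by fun_prop) _ _,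
    neg_mul, sum_mul]
  push_cast
  refine congrArg _ (sum_congr rfl fun ⟨i, j⟩ hij ↦ ?_)
  rw [HasAntidiagonal.mem_antidiagonal] at hij
  subst hij
  dsimp only
  rw [integral_const_mul, integral_sub_pow_mul_pow, ← add_succ_choose_div_mul_factorial_div i j]
  ring

theorem stmt_4 (m : ℕ) (hm : 1 ≤ m) :
    ∫ x in (0 : ℝ)..1, (1 / x) * ∫ y in (0 : ℝ)..x, (1 / y) *
      ∫ z in (0 : ℝ)..y, (1 / z) * ((x - y) ^ m - (x - y + z) ^ m) =
      -(1 / m) * ∑ k ∈ Finset.Icc 1 m, 1 / (k : ℝ) ^ 2 := by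
  obtain ⟨n, rfl⟩ : ∃ n, m = n + 1 := ⟨m - 1, by omega⟩
  simp only [integral_one_div_mul_pow_sub_add_pow, integral_one_div_mul_neg_sum_choose]
  rw [integral_one_div_mul_of_eq_mul
      (g := fun x ↦ -(∑ k ∈ Icc 1 (n + 1), 1 / (k : ℝ) ^ 2) * x ^ n) (fun x _ ↦ by ring),
    integral_const_mul, integral_pow]
  push_cast
  ring
end

section
/- For every natural number m ≥ 1, ∫_0^1 (1/x) ∫_0^x (1/y) ∫_0^y (1/z) [x^m - (x-z)^m] dz dy dx = (1/m) ∑_{k=1}^{m} H_k/k, where H_k is the k-th harmonic number. -/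
open Finset intervalIntegral

lemma pow_sub_sub_pow_eq_sum {R : Type*} [CommRing R] (x z : R) (m : ℕ) :
    x ^ m - (x - z) ^ m =
      ∑ j ∈ range m, (-1) ^ j * m.choose (j + 1) * x ^ (m - (j + 1)) * z ^ (j + 1) := by
  rw [sub_eq_add_neg x z, add_comm x, add_pow, sum_range_succ']
  simp only [pow_zero, one_mul, Nat.sub_zero, Nat.choose_zero_right, Nat.cast_one, mul_one,
    sub_add_cancel_right, ← sum_neg_distrib]
  refine sum_congr rfl fun j _ => ?_
  rw [neg_pow, pow_succ]
  ring

lemma integral_inv_mul_sum_pow_succ (s : Finset ℕ) (c : ℕ → ℝ) (y : ℝ) :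
    ∫ z in (0 : ℝ)..y, 1 / z * ∑ j ∈ s, c j * z ^ (j + 1) =
      ∑ j ∈ s, c j / (j + 1) * y ^ (j + 1) := by
  have h_ae : ∀ᵐ z : ℝ, z ∈ Set.uIoc 0 y →
      1 / z * ∑ j ∈ s, c j * z ^ (j + 1) = ∑ j ∈ s, c j * z ^ j := by
    filter_upwards [MeasureTheory.Measure.ae_ne MeasureTheory.volume 0] with z hz _
    rw [mul_sum]
    refine sum_congr rfl fun j _ => ?_
    field_simp
    ring
  rw [integral_congr_ae h_ae, integral_finsetSum fun j _ => (intervalIntegrable_pow j).const_mul _]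
  refine sum_congr rfl fun j _ => ?_
  rw [integral_const_mul, integral_pow, zero_pow j.succ_ne_zero, sub_zero]
  ring

/-- `Tₚ(n)`, indexed by `j = k - 1`. -/
noncomputable def alternatingChooseSum (p n : ℕ) : ℝ :=
  ∑ j ∈ range n, (-1) ^ j * n.choose (j + 1) / ((j : ℝ) + 1) ^ p

lemma alternatingChooseSum_zero_succ (n : ℕ) : alternatingChooseSum 0 (n + 1) = 1 := by
  have h := Int.alternating_sum_range_choose_of_ne n.succ_ne_zero
  rw [sum_range_succ'] at h
  simp only [pow_succ, mul_neg_one, neg_mul, sum_neg_distrib, pow_zero,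
    Nat.choose_zero_right, Nat.cast_one, mul_one] at h
  have h' : ∑ j ∈ range (n + 1), (-1 : ℤ) ^ j * (n + 1).choose (j + 1) = 1 := by
    linear_combination -h
  simp only [alternatingChooseSum, pow_zero, div_one]
  exact_mod_cast h'

lemma alternatingChooseSum_succ_succ (p n : ℕ) :
    alternatingChooseSum (p + 1) (n + 1) =
      alternatingChooseSum (p + 1) n + alternatingChooseSum p (n + 1) / (n + 1) := by
  have h_pascal : alternatingChooseSum (p + 1) (n + 1) =
      ∑ j ∈ range (n + 1), (-1) ^ j * n.choose j / ((j : ℝ) + 1) ^ (p + 1) +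
        alternatingChooseSum (p + 1) n := by
    simp only [alternatingChooseSum, Nat.choose_succ_succ', Nat.cast_add, mul_add, add_div,
      sum_add_distrib]
    rw [sum_range_succ (fun j => (-1 : ℝ) ^ j * n.choose (j + 1) / ((j : ℝ) + 1) ^ (p + 1)) n]
    simp
  have h_absorb : ∑ j ∈ range (n + 1), (-1) ^ j * n.choose j / ((j : ℝ) + 1) ^ (p + 1) =
      alternatingChooseSum p (n + 1) / (n + 1) := by
    rw [alternatingChooseSum, sum_div]
    refine sum_congr rfl fun j _ => ?_
    have h_choose : ((n : ℝ) + 1) * n.choose j = (n + 1).choose (j + 1) * (j + 1) := by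
      exact_mod_cast Nat.add_one_mul_choose_eq n j
    field_simp
    linear_combination ((j : ℝ) + 1) ^ p * h_choose
  rw [h_pascal, h_absorb, add_comm]

lemma alternatingChooseSum_one (n : ℕ) : alternatingChooseSum 1 n = H n := by
  induction n with
  | zero => simp [alternatingChooseSum, H]
  | succ n ih =>
    rw [alternatingChooseSum_succ_succ, ih, alternatingChooseSum_zero_succ, H, H,
      sum_Icc_succ_top (Nat.le_add_left 1 n)]
    push_cast
    ring

lemma alternatingChooseSum_two (n : ℕ) : alternatingChooseSum 2 n = ∑ k ∈ Icc 1 n, H k / k := by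
  induction n with
  | zero => simp [alternatingChooseSum]
  | succ n ih =>
    rw [alternatingChooseSum_succ_succ, ih, alternatingChooseSum_one,
      sum_Icc_succ_top (Nat.le_add_left 1 n)]
    push_cast
    ring

theorem stmt_5 (m : ℕ) (hm : 1 ≤ m) :
    ∫ x in (0 : ℝ)..1, (1 / x) * ∫ y in (0 : ℝ)..x, (1 / y) *
      ∫ z in (0 : ℝ)..y, (1 / z) * (x ^ m - (x - z) ^ m) =
      (1 / m) * ∑ k ∈ Finset.Icc 1 m, H k / k := by
  obtain ⟨n, rfl⟩ : ∃ n, m = n + 1 := ⟨m - 1, by omega⟩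
  have h_mid (x : ℝ) : ∫ y in (0 : ℝ)..x, 1 / y * ∑ j ∈ range (n + 1),
      (-1) ^ j * (n + 1).choose (j + 1) * x ^ (n + 1 - (j + 1)) / (j + 1) * y ^ (j + 1) =
      alternatingChooseSum 2 (n + 1) * x ^ (n + 1) := by
    rw [integral_inv_mul_sum_pow_succ, alternatingChooseSum, sum_mul]
    refine sum_congr rfl fun j hj => ?_
    rw [← pow_sub_mul_pow x (Nat.add_one_le_of_lt (mem_range.mp hj))]
    field_simp
  simp only [pow_sub_sub_pow_eq_sum, integral_inv_mul_sum_pow_succ, h_mid]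
  have h_outer := integral_inv_mul_sum_pow_succ {n} (fun _ => alternatingChooseSum 2 (n + 1)) 1
  simp only [sum_singleton, one_pow, mul_one] at h_outer
  rw [h_outer, alternatingChooseSum_two]
  push_cast
  ring
end

section
/- For every natural number n ≥ 1, ∫_0^1 (1/x) ∫_0^x (1/y) ∫_0^y (1/z) [x^{2n+1} + (x-y)^{2n+1} - (x-z)^{2n+1} - (x-y+z)^{2n+1}] dz dy dx = (1/(2n+1)) ∑_{k=1}^{2n+1} H_{k-1}/k. -/
/-!
Write the numerator as `(x^m - (x-z)^m) - ((x-y+z)^m - (x-y)^m)`. Both brackets vanish at `z = 0`,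
so after dividing by `z` every integrand is a polynomial. The geometric-sum expansion of the first
bracket integrates twice to `x^m ∑_{k ≤ m} H_k / k`. The binomial expansion of the second produces
the Beta integrals `∫₀ˣ y^(k-1) (x-y)^(m-k) dy = x^m / (k * choose m k)`, which cancel the binomial
coefficients and contribute `x^m ∑_{k ≤ m} 1 / k²`. The outer integral divides by `m`, and
`H_k / k - 1 / k² = H_{k-1} / k`.
-/

open MeasureTheory intervalIntegral Finset

lemma sum_Icc_one_eq_sum_range {M : Type*} [AddCommMonoid M] (f : ℕ → M) (m : ℕ) :
    ∑ k ∈ Icc 1 m, f k = ∑ k ∈ range m, f (k + 1) := by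
  rw [← Ico_add_one_right_eq_Icc, sum_Ico_eq_sum_range, add_tsub_cancel_right]
  simp only [add_comm 1]

lemma H_eq_sum_range (p : ℕ) : H p = ∑ i ∈ range p, 1 / ((i : ℝ) + 1) := by
  simp only [H, sum_Icc_one_eq_sum_range, Nat.cast_succ]

lemma H_succ (k : ℕ) : H (k + 1) = H k + 1 / ((k : ℝ) + 1) := by
  simp only [H_eq_sum_range, sum_range_succ]

lemma pow_sub_sub_pow_eq_mul_geom_sum {R : Type*} [CommRing R] (x z : R) (m : ℕ) :
    x ^ m - (x - z) ^ m = z * ∑ i ∈ range m, (x - z) ^ i * x ^ (m - 1 - i) := by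
  linear_combination geom_sum₂_mul (x - z) x m

lemma add_pow_sub_pow_eq_mul_sum {R : Type*} [CommRing R] (w z : R) (m : ℕ) :
    (w + z) ^ m - w ^ m =
      z * ∑ i ∈ range m, (m.choose (i + 1) : R) * w ^ (m - (i + 1)) * z ^ i := by
  rw [add_comm, add_pow, sum_range_succ', mul_sum]
  simp only [pow_zero, Nat.choose_zero_right, Nat.cast_one, one_mul, mul_one, Nat.sub_zero]
  rw [add_sub_cancel_right]
  exact sum_congr rfl fun i _ => by ring

lemma integral_congr_of_ne_zero {f g : ℝ → ℝ} {a b : ℝ} (h : ∀ z ≠ 0, f z = g z) :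
    ∫ z in a..b, f z = ∫ z in a..b, g z :=
  integral_congr_ae <| (Measure.ae_ne volume 0).mono fun z hz _ => h z hz

lemma integral_sub_pow (x y : ℝ) (i : ℕ) :
    ∫ z in (0 : ℝ)..y, (x - z) ^ i = (x ^ (i + 1) - (x - y) ^ (i + 1)) / (i + 1) := by
  rw [integral_comp_sub_left (fun z => z ^ i), integral_pow, sub_zero]

lemma integral_geom_sum₂_sub (x : ℝ) (p : ℕ) :
    ∫ y in (0 : ℝ)..x, ∑ i ∈ range p, (x - y) ^ i * x ^ (p - 1 - i) = H p * x ^ p := by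
  rw [integral_finsetSum fun i _ => (by fun_prop : Continuous _).intervalIntegrable _ _,
    H_eq_sum_range, sum_mul]
  refine sum_congr rfl fun i hi => ?_
  have hp : p - 1 - i + (i + 1) = p := by have := mem_range.1 hi; omega
  rw [intervalIntegral.integral_mul_const, integral_sub_pow, sub_self, zero_pow i.succ_ne_zero,
    sub_zero]
  conv_rhs => rw [← hp, pow_add]
  ring

lemma integral_pow_mul_sub_pow_succ (x : ℝ) (a b : ℕ) :
    ∫ y in (0 : ℝ)..x, y ^ a * (x - y) ^ (b + 1) =
      (b + 1) / (a + 1) * ∫ y in (0 : ℝ)..x, y ^ (a + 1) * (x - y) ^ b := by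
  have hu : ∀ y ∈ Set.uIcc 0 x, HasDerivAt (fun y => (x - y) ^ (b + 1))
      (-(((b : ℝ) + 1) * (x - y) ^ b)) y := fun y _ => by
    simpa using ((hasDerivAt_id y).const_sub x).fun_pow (b + 1)
  have hv : ∀ y ∈ Set.uIcc 0 x, HasDerivAt (fun y : ℝ => y ^ (a + 1) / ((a : ℝ) + 1)) (y ^ a) y :=
    fun y _ => by
      have := (hasDerivAt_pow (a + 1) y).div_const ((a : ℝ) + 1)
      rwa [Nat.add_sub_cancel, Nat.cast_succ, mul_div_cancel_left₀ _ (by positivity)] at this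
  have ibp := intervalIntegral.integral_mul_deriv_eq_deriv_mul hu hv
    ((by fun_prop : Continuous _).intervalIntegrable _ _)
    ((by fun_prop : Continuous _).intervalIntegrable _ _)
  simp only [sub_self, zero_pow (Nat.succ_ne_zero _), zero_mul, zero_div, mul_zero,
    sub_zero] at ibp
  rw [← intervalIntegral.integral_const_mul]
  simp_rw [mul_comm (_ ^ a)]
  rw [ibp, zero_sub, ← intervalIntegral.integral_neg]
  refine integral_congr fun y _ => ?_
  field_simp

lemma integral_pow_mul_sub_pow (x : ℝ) (a b : ℕ) :
    ∫ y in (0 : ℝ)..x, y ^ a * (x - y) ^ b =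
      x ^ (a + b + 1) / ((a + 1) * (a + b + 1).choose (a + 1)) := by
  induction b generalizing a with
  | zero => simp [integral_pow]
  | succ b ih =>
    have hchoose : ((a + b + 2).choose (a + 2) : ℝ) * (a + 2) =
        (a + b + 2).choose (a + 1) * (b + 1) := by
      have := Nat.choose_succ_right_eq (a + b + 2) (a + 1)
      rw [show a + b + 2 - (a + 1) = b + 1 by omega] at this
      exact_mod_cast this
    have h1 : ((a + b + 2).choose (a + 1) : ℝ) ≠ 0 :=
      Nat.cast_ne_zero.2 (Nat.choose_pos (by omega)).ne'
    have h2 : ((a + b + 2).choose (a + 2) : ℝ) ≠ 0 :=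
      Nat.cast_ne_zero.2 (Nat.choose_pos (by omega)).ne'
    rw [integral_pow_mul_sub_pow_succ, ih, show a + 1 + b + 1 = a + b + 2 by ring,
      show a + (b + 1) + 1 = a + b + 2 by ring, show a + 1 + 1 = a + 2 by ring]
    push_cast
    field_simp
    linear_combination -x ^ (a + b + 2) * hchoose

lemma innermost_integral_eq_sum (m : ℕ) (x y : ℝ) :
    ∫ z in (0 : ℝ)..y, 1 / z * (x ^ m + (x - y) ^ m - (x - z) ^ m - (x - y + z) ^ m) =
      ∑ i ∈ range m, (x ^ (m - 1 - i) * ((x ^ (i + 1) - (x - y) ^ (i + 1)) / (i + 1)) -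
        m.choose (i + 1) * (x - y) ^ (m - (i + 1)) * (y ^ (i + 1) / (i + 1))) := by
  have hpoly : ∀ z ≠ 0, 1 / z * (x ^ m + (x - y) ^ m - (x - z) ^ m - (x - y + z) ^ m) =
      ∑ i ∈ range m, ((x - z) ^ i * x ^ (m - 1 - i) -
        m.choose (i + 1) * (x - y) ^ (m - (i + 1)) * z ^ i) := fun z hz => by
    rw [show x ^ m + (x - y) ^ m - (x - z) ^ m - (x - y + z) ^ m =
        (x ^ m - (x - z) ^ m) - ((x - y + z) ^ m - (x - y) ^ m) by ring,
      pow_sub_sub_pow_eq_mul_geom_sum, add_pow_sub_pow_eq_mul_sum, ← mul_sub, ← mul_assoc,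
      one_div_mul_cancel hz, one_mul, sum_sub_distrib]
  rw [integral_congr_of_ne_zero hpoly,
    integral_finsetSum fun i _ => (by fun_prop : Continuous _).intervalIntegrable _ _]
  refine sum_congr rfl fun i _ => ?_
  rw [integral_sub ((by fun_prop : Continuous _).intervalIntegrable _ _)
      ((by fun_prop : Continuous _).intervalIntegrable _ _),
    intervalIntegral.integral_mul_const, intervalIntegral.integral_const_mul, integral_sub_pow,
    integral_pow, zero_pow i.succ_ne_zero, sub_zero]
  ring

lemma double_integral_eq_mul_pow (m : ℕ) (x : ℝ) :
    ∫ y in (0 : ℝ)..x, 1 / y * ∫ z in (0 : ℝ)..y,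
      1 / z * (x ^ m + (x - y) ^ m - (x - z) ^ m - (x - y + z) ^ m) =
      (∑ i ∈ range m, (H (i + 1) / (i + 1) - 1 / ((i : ℝ) + 1) ^ 2)) * x ^ m := by
  simp_rw [innermost_integral_eq_sum]
  have hpoly : ∀ y ≠ 0, 1 / y * ∑ i ∈ range m, (x ^ (m - 1 - i) *
        ((x ^ (i + 1) - (x - y) ^ (i + 1)) / (i + 1)) -
        m.choose (i + 1) * (x - y) ^ (m - (i + 1)) * (y ^ (i + 1) / (i + 1))) =
      ∑ i ∈ range m, (x ^ (m - 1 - i) / (i + 1) *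
          ∑ j ∈ range (i + 1), (x - y) ^ j * x ^ (i + 1 - 1 - j) -
        m.choose (i + 1) / (i + 1) * (y ^ i * (x - y) ^ (m - (i + 1)))) := fun y hy => by
    rw [mul_sum]
    refine sum_congr rfl fun i _ => ?_
    rw [pow_sub_sub_pow_eq_mul_geom_sum x y (i + 1), pow_succ]
    field_simp
  rw [integral_congr_of_ne_zero hpoly,
    integral_finsetSum fun i _ => (by fun_prop : Continuous _).intervalIntegrable _ _, sum_mul]
  refine sum_congr rfl fun i hi => ?_
  have him : i + (m - (i + 1)) + 1 = m := by have := mem_range.1 hi; omega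
  have hpow : x ^ (m - 1 - i) * x ^ (i + 1) = x ^ m := by rw [← pow_add]; congr 1; omega
  have hchoose : (m.choose (i + 1) : ℝ) ≠ 0 :=
    Nat.cast_ne_zero.2 (Nat.choose_pos (by have := mem_range.1 hi; omega)).ne'
  rw [integral_sub ((by fun_prop : Continuous _).intervalIntegrable _ _)
      ((by fun_prop : Continuous _).intervalIntegrable _ _),
    intervalIntegral.integral_const_mul, intervalIntegral.integral_const_mul,
    integral_geom_sum₂_sub, integral_pow_mul_sub_pow, him, ← hpow]
  field_simp

lemma sum_H_div_sub_inv_sq (m : ℕ) :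
    ∑ i ∈ range m, (H (i + 1) / (i + 1) - 1 / ((i : ℝ) + 1) ^ 2) =
      ∑ k ∈ Icc 1 m, H (k - 1) / k := by
  rw [sum_Icc_one_eq_sum_range]
  refine sum_congr rfl fun i _ => ?_
  rw [H_succ, add_tsub_cancel_right, Nat.cast_succ]
  field_simp
  ring

theorem integral_triple_eq (m : ℕ) :
    ∫ x in (0 : ℝ)..1, 1 / x * ∫ y in (0 : ℝ)..x, 1 / y * ∫ z in (0 : ℝ)..y, 1 / z *
      (x ^ (m + 1) + (x - y) ^ (m + 1) - (x - z) ^ (m + 1) - (x - y + z) ^ (m + 1)) =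
      1 / (m + 1) * ∑ k ∈ Icc 1 (m + 1), H (k - 1) / k := by
  simp_rw [double_integral_eq_mul_pow, ← sum_H_div_sub_inv_sq]
  set c := ∑ i ∈ range (m + 1), (H (i + 1) / (i + 1) - 1 / ((i : ℝ) + 1) ^ 2)
  rw [integral_congr_of_ne_zero (g := fun x => c * x ^ m) fun x hx => by field_simp; ring,
    intervalIntegral.integral_const_mul, integral_pow, one_pow, zero_pow m.succ_ne_zero, sub_zero]
  ring

theorem stmt_6_general (n : ℕ) :
    ∫ x in (0 : ℝ)..1, (1 / x) * ∫ y in (0 : ℝ)..x, (1 / y) *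
      ∫ z in (0 : ℝ)..y, (1 / z) *
        (x ^ (2 * n + 1) + (x - y) ^ (2 * n + 1)
          - (x - z) ^ (2 * n + 1) - (x - y + z) ^ (2 * n + 1)) =
      (1 / (2 * n + 1)) * ∑ k ∈ Finset.Icc 1 (2 * n + 1), H (k - 1) / k := by
  simpa using integral_triple_eq (2 * n)

theorem stmt_6 (n : ℕ) (hn : 1 ≤ n) :
    ∫ x in (0 : ℝ)..1, (1 / x) * ∫ y in (0 : ℝ)..x, (1 / y) *
      ∫ z in (0 : ℝ)..y, (1 / z) *
        (x ^ (2 * n + 1) + (x - y) ^ (2 * n + 1)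
          - (x - z) ^ (2 * n + 1) - (x - y + z) ^ (2 * n + 1)) =
      (1 / (2 * n + 1)) * ∑ k ∈ Finset.Icc 1 (2 * n + 1), H (k - 1) / k :=
  stmt_6_general n
end

section
/- For every real t > 0, the triple integral f(t) = ∫_0^t (1/x) ∫_0^x (1/y) ∫_0^y (1/z) [sin x + sin(x-y) - sin(x-z) - sin(x-y+z)] dz dy dx is absolutely convergent, and |f(t)| ≤ 2t. -/
open MeasureTheory Real

/-! The numerator is `(sin x - sin (x - z)) - (sin (x - y + z) - sin (x - y))`, a difference of two
increments of `sin` over intervals of length `z`; as `sin` is 1-Lipschitz it is at most `2 z` in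
absolute value. So the integrand is dominated by `2 / (x y)`, whose integral over the simplex
`0 < z < y < x < t` is exactly `2 t` by Fubini. -/

theorem abs_sin_add_sin_sub_sub_le (x y z : ℝ) :
    |sin x + sin (x - y) - sin (x - z) - sin (x - y + z)| ≤ 2 * |z| := by
  have h₁ := abs_sin_sub_sin_le x (x - z)
  have h₂ := abs_sin_sub_sin_le (x - y + z) (x - y)
  rw [show x - (x - z) = z by ring] at h₁
  rw [show x - y + z - (x - y) = z by ring] at h₂
  calc _ = |(sin x - sin (x - z)) - (sin (x - y + z) - sin (x - y))| := by congr 1; ring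
    _ ≤ |z| + |z| := (abs_sub _ _).trans (add_le_add h₁ h₂)
    _ = 2 * |z| := by ring

theorem abs_sin_add_sin_sub_sub_div_le {x y z : ℝ} (hx : 0 < x) (hy : 0 < y) (hz : 0 < z) :
    |(sin x + sin (x - y) - sin (x - z) - sin (x - y + z)) / (x * y * z)| ≤ 2 / (x * y) := by
  rw [abs_div, abs_of_pos (by positivity : 0 < x * y * z),
    div_le_div_iff₀ (by positivity) (by positivity)]
  have := abs_sin_add_sin_sub_sub_le x y z
  rw [abs_of_pos hz] at this
  nlinarith [mul_pos hx hy]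

theorem setLIntegral_prod_sections {α β : Type*} [MeasurableSpace α] [MeasurableSpace β]
    {μ : Measure α} {ν : Measure β} [SFinite ν] {s : Set α} {T : α → Set β} (hs : MeasurableSet s)
    (hsT : MeasurableSet {p : α × β | p.1 ∈ s ∧ p.2 ∈ T p.1}) {f : α × β → ENNReal}
    (hf : Measurable f) :
    ∫⁻ p in {p : α × β | p.1 ∈ s ∧ p.2 ∈ T p.1}, f p ∂μ.prod ν
      = ∫⁻ x in s, ∫⁻ y in T x, f (x, y) ∂ν ∂μ := by
  rw [← lintegral_indicator hsT, lintegral_prod _ (hf.indicator hsT).aemeasurable,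
    ← lintegral_indicator hs]
  congr 1 with x
  by_cases hx : x ∈ s
  · have hTx : MeasurableSet (T x) := by
      simpa [hx] using measurable_prodMk_left hsT (x := x)
    rw [Set.indicator_of_mem hx, ← lintegral_indicator hTx]
    congr 1 with y
    by_cases hy : y ∈ T x <;> simp [hx, hy]
  · simp [Set.indicator, hx]

open Set in
theorem lintegral_ofReal_div_mul_simplex {c : ℝ} (hc : 0 ≤ c) (t : ℝ) :
    ∫⁻ p in {p : ℝ × ℝ × ℝ | 0 < p.2.2 ∧ p.2.2 < p.2.1 ∧ p.2.1 < p.1 ∧ p.1 < t},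
      ENNReal.ofReal (c / (p.1 * p.2.1)) = ENNReal.ofReal (c * t) := by
  have hS : {p : ℝ × ℝ × ℝ | 0 < p.2.2 ∧ p.2.2 < p.2.1 ∧ p.2.1 < p.1 ∧ p.1 < t}
      = {p | p.1 ∈ Ioo 0 t ∧ p.2 ∈ {q : ℝ × ℝ | q.1 ∈ Ioo 0 p.1 ∧ q.2 ∈ Ioo 0 q.1}} := by
    ext ⟨x, y, z⟩
    simp only [mem_ofPred_eq, mem_Ioo]
    constructor
    · rintro ⟨hz, hzy, hyx, hxt⟩
      exact ⟨⟨by linarith, hxt⟩, ⟨by linarith, hyx⟩, hz, hzy⟩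
    · rintro ⟨⟨-, hxt⟩, ⟨-, hyx⟩, hz, hzy⟩
      exact ⟨hz, hzy, hyx, hxt⟩
  rw [hS, Measure.volume_eq_prod,
    setLIntegral_prod_sections (T := fun x => {q : ℝ × ℝ | q.1 ∈ Ioo 0 x ∧ q.2 ∈ Ioo 0 q.1})
      measurableSet_Ioo (by measurability) (by measurability)]
  calc ∫⁻ x in Ioo 0 t, ∫⁻ q in {q : ℝ × ℝ | q.1 ∈ Ioo 0 x ∧ q.2 ∈ Ioo 0 q.1},
        ENNReal.ofReal (c / (x * q.1))
      = ∫⁻ x in Ioo 0 t, ∫⁻ y in Ioo 0 x, ∫⁻ _ in Ioo 0 y, ENNReal.ofReal (c / (x * y)) := by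
        congr 1 with x
        rw [Measure.volume_eq_prod, setLIntegral_prod_sections (T := fun y => Ioo 0 y)
          measurableSet_Ioo (by measurability) (by measurability)]
    _ = ∫⁻ x in Ioo 0 t, ∫⁻ _ in Ioo 0 x, ENNReal.ofReal (c / x) := by
        refine setLIntegral_congr_fun measurableSet_Ioo fun x hx => ?_
        refine setLIntegral_congr_fun measurableSet_Ioo fun y hy => ?_
        rw [setLIntegral_const, volume_Ioo, sub_zero,
          ← ENNReal.ofReal_mul (div_nonneg hc (mul_pos hx.1 hy.1).le)]
        congr 1
        field_simp [hy.1.ne']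
    _ = ∫⁻ _ in Ioo 0 t, ENNReal.ofReal c := by
        refine setLIntegral_congr_fun measurableSet_Ioo fun x hx => ?_
        rw [setLIntegral_const, volume_Ioo, sub_zero,
          ← ENNReal.ofReal_mul (div_nonneg hc hx.1.le)]
        congr 1
        field_simp [hx.1.ne']
    _ = ENNReal.ofReal (c * t) := by
        rw [setLIntegral_const, volume_Ioo, sub_zero, ← ENNReal.ofReal_mul hc]

theorem stmt_7 (t : ℝ) (ht : 0 < t) :
    IntegrableOn
      (fun p : ℝ × ℝ × ℝ =>
        (Real.sin p.1 + Real.sin (p.1 - p.2.1) - Real.sin (p.1 - p.2.2)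
          - Real.sin (p.1 - p.2.1 + p.2.2)) / (p.1 * p.2.1 * p.2.2))
      {p : ℝ × ℝ × ℝ | 0 < p.2.2 ∧ p.2.2 < p.2.1 ∧ p.2.1 < p.1 ∧ p.1 < t} ∧
    |∫ p in {p : ℝ × ℝ × ℝ | 0 < p.2.2 ∧ p.2.2 < p.2.1 ∧ p.2.1 < p.1 ∧ p.1 < t},
        (Real.sin p.1 + Real.sin (p.1 - p.2.1) - Real.sin (p.1 - p.2.2)
          - Real.sin (p.1 - p.2.1 + p.2.2)) / (p.1 * p.2.1 * p.2.2)| ≤ 2 * t := by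
  set S := {p : ℝ × ℝ × ℝ | 0 < p.2.2 ∧ p.2.2 < p.2.1 ∧ p.2.1 < p.1 ∧ p.1 < t}
  have hS : MeasurableSet S := by measurability
  have hbound : ∀ᵐ p ∂volume.restrict S,
      ‖(sin p.1 + sin (p.1 - p.2.1) - sin (p.1 - p.2.2) - sin (p.1 - p.2.1 + p.2.2))
        / (p.1 * p.2.1 * p.2.2)‖ ≤ 2 / (p.1 * p.2.1) := by
    refine ae_restrict_of_forall_mem hS fun p ⟨hz, hzy, hyx, _⟩ => ?_
    exact abs_sin_add_sin_sub_sub_div_le (by linarith) (by linarith) hz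
  have hnonneg : 0 ≤ᵐ[volume.restrict S] fun p => 2 / (p.1 * p.2.1) :=
    ae_restrict_of_forall_mem hS fun p ⟨hz, hzy, hyx, _⟩ =>
      div_nonneg zero_le_two (mul_pos (by linarith) (by linarith)).le
  have hmeas : Measurable fun p : ℝ × ℝ × ℝ => 2 / (p.1 * p.2.1) := by fun_prop
  have hlint := lintegral_ofReal_div_mul_simplex zero_le_two t
  have hmajorant : IntegrableOn (fun p : ℝ × ℝ × ℝ => 2 / (p.1 * p.2.1)) S :=
    ⟨hmeas.aestronglyMeasurable,
      (hasFiniteIntegral_iff_ofReal hnonneg).2 (hlint ▸ ENNReal.ofReal_lt_top)⟩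
  refine ⟨hmajorant.mono' (Measurable.aestronglyMeasurable (by fun_prop)) hbound, ?_⟩
  calc _ ≤ ∫ p in S, 2 / (p.1 * p.2.1) := norm_integral_le_of_norm_le hmajorant hbound
    _ = 2 * t := by
      rw [integral_eq_lintegral_of_nonneg_ae hnonneg hmeas.aestronglyMeasurable, hlint,
        ENNReal.toReal_ofReal (by positivity)]
end

section
/- The function g(x) = (1/x)·((1/2)·log²(1-x) + ∑_{n=1}^∞ ((1-x)^n - 1)/n²) is integrable on the interval (0,1). -/
/-!
The integrand is dominated on `(0, 1)` by `C x^(-1/2) + 8 (1 - x)^(-1/2)`.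
For the series, `1 - (1 - x)^m ≤ min (1, m x) ≤ √(m x)` gives `|∑ₙ …| ≤ C √x`, which cancels
half of the factor `1 / x`. For the logarithm, `-log (1 - x) ≤ x (1 - x)^(-ε) / ε` keeps a factor
`x` while costing only a mild power singularity at `1`.
-/

open MeasureTheory Set Real

lemma one_sub_one_sub_pow_le_sqrt {x : ℝ} (hx0 : 0 ≤ x) (hx1 : x ≤ 1) (m : ℕ) :
    1 - (1 - x) ^ m ≤ √(m * x) := by
  have hpow_nonneg : 0 ≤ (1 - x) ^ m := pow_nonneg (by linarith) m
  have hpow_le_one : (1 - x) ^ m ≤ 1 := pow_le_one₀ (by linarith) (by linarith)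
  have hbernoulli : 1 - m * x ≤ (1 - x) ^ m := by
    simpa [sub_eq_add_neg] using one_add_mul_le_pow (a := -x) (by linarith) m
  rw [Real.le_sqrt (by linarith) (by positivity)]
  nlinarith

/-- `∑' n, dilogTerm n x = Li₂ (1 - x) - ζ(2)`. -/
noncomputable def dilogTerm (n : ℕ) (x : ℝ) : ℝ := ((1 - x) ^ (n + 1) - 1) / ((n : ℝ) + 1) ^ 2

lemma norm_dilogTerm_le {x : ℝ} (hx0 : 0 ≤ x) (hx1 : x ≤ 1) (n : ℕ) :
    ‖dilogTerm n x‖ ≤ √x * ((n : ℝ) + 1) ^ (-(3 / 2) : ℝ) := by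
  have hm : (0 : ℝ) < n + 1 := by positivity
  have hpow_le_one : (1 - x) ^ (n + 1) ≤ 1 := pow_le_one₀ (by linarith) (by linarith)
  have hrpow : ((n : ℝ) + 1) ^ (-(3 / 2) : ℝ) = √((n : ℝ) + 1) / ((n : ℝ) + 1) ^ 2 := by
    rw [sqrt_eq_rpow, ← rpow_natCast, ← rpow_sub hm]
    norm_num
  rw [dilogTerm, norm_div, Real.norm_eq_abs, Real.norm_eq_abs, abs_of_nonpos (by linarith),
    abs_of_pos (by positivity), hrpow, ← mul_div_assoc, ← sqrt_mul' _ hm.le, mul_comm x]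
  gcongr
  simpa using one_sub_one_sub_pow_le_sqrt hx0 hx1 (n + 1)

lemma summable_nat_add_one_rpow {p : ℝ} (hp : p < -1) :
    Summable (fun n : ℕ => ((n : ℝ) + 1) ^ p) := by
  simpa using (summable_nat_add_iff 1).mpr (Real.summable_nat_rpow.mpr hp)

lemma norm_tsum_dilogTerm_le {x : ℝ} (hx0 : 0 ≤ x) (hx1 : x ≤ 1) :
    ‖∑' n, dilogTerm n x‖ ≤ √x * ∑' n : ℕ, ((n : ℝ) + 1) ^ (-(3 / 2) : ℝ) := by
  have hsum := summable_nat_add_one_rpow (p := -(3 / 2)) (by norm_num)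
  rw [← tsum_mul_left]
  exact tsum_of_norm_bounded (hsum.mul_left _).hasSum (norm_dilogTerm_le hx0 hx1)

lemma continuousOn_tsum_dilogTerm : ContinuousOn (fun x => ∑' n, dilogTerm n x) (Icc 0 1) := by
  refine continuousOn_tsum (fun n => by unfold dilogTerm; fun_prop)
    (summable_nat_add_one_rpow (p := -(3 / 2)) (by norm_num)) fun n x hx => ?_
  calc ‖dilogTerm n x‖ ≤ √x * ((n : ℝ) + 1) ^ (-(3 / 2) : ℝ) := norm_dilogTerm_le hx.1 hx.2 n
    _ ≤ ((n : ℝ) + 1) ^ (-(3 / 2) : ℝ) := by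
      refine mul_le_of_le_one_left (by positivity) ?_
      exact sqrt_le_one.mpr hx.2

lemma neg_log_one_sub_le {x ε : ℝ} (hx0 : 0 ≤ x) (hx1 : x < 1) (hε0 : 0 < ε) (hε1 : ε ≤ 1) :
    -log (1 - x) ≤ x * (1 - x) ^ (-ε) / ε := by
  have hy : 0 < 1 - x := by linarith
  have hlog : ε * -log (1 - x) ≤ (1 - x) ^ (-ε) - 1 := by
    have := log_le_sub_one_of_pos (rpow_pos_of_pos hy (-ε))
    rwa [log_rpow hy, neg_mul, ← mul_neg] at this
  have hself : 1 - x ≤ (1 - x) ^ ε := self_le_rpow_of_le_one hy.le (by linarith) hε1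
  have hmul : (1 - x) ^ (-ε) * (1 - x) ^ ε = 1 := by
    rw [← rpow_add hy, neg_add_cancel, rpow_zero]
  have hpos : 0 < (1 - x) ^ (-ε) := rpow_pos_of_pos hy _
  rw [le_div_iff₀ hε0]
  nlinarith [mul_le_mul_of_nonneg_left hself hpos.le]

lemma sq_log_one_sub_div_le {x ε : ℝ} (hx0 : 0 < x) (hx1 : x < 1) (hε0 : 0 < ε) (hε1 : ε ≤ 1) :
    log (1 - x) ^ 2 / x ≤ (1 - x) ^ (-(2 * ε)) / ε ^ 2 := by
  have hy : 0 < 1 - x := by linarith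
  have hL : 0 ≤ -log (1 - x) := neg_nonneg.mpr (log_nonpos hy.le (by linarith))
  have hbound := neg_log_one_sub_le hx0.le hx1 hε0 hε1
  have hsq : (1 - x) ^ (-(2 * ε)) = ((1 - x) ^ (-ε)) ^ 2 := by
    rw [← rpow_natCast, ← rpow_mul hy.le]
    ring_nf
  calc log (1 - x) ^ 2 / x = (-log (1 - x)) ^ 2 / x := by rw [neg_sq]
    _ ≤ (x * (1 - x) ^ (-ε) / ε) ^ 2 / x := by gcongr
    _ = x * ((1 - x) ^ (-(2 * ε)) / ε ^ 2) := by rw [hsq]; field_simp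
    _ ≤ (1 - x) ^ (-(2 * ε)) / ε ^ 2 := mul_le_of_le_one_left (by positivity) hx1.le

lemma integrableOn_Ioo_rpow_add_one_sub_rpow {s : ℝ} (hs : -1 < s) (a b : ℝ) :
    IntegrableOn (fun x : ℝ => a * x ^ s + b * (1 - x) ^ s) (Ioo 0 1) := by
  have hleft : IntegrableOn (fun x : ℝ => x ^ s) (Ioo 0 1) :=
    (intervalIntegral.integrableOn_Ioo_rpow_iff one_pos).mpr hs
  have hright : IntegrableOn (fun x : ℝ => (1 - x) ^ s) (Ioo 0 1) := by
    have h := (intervalIntegral.intervalIntegrable_rpow' (a := 0) (b := 1) hs).comp_sub_left 1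
    rw [sub_zero, sub_self] at h
    exact (intervalIntegrable_iff_integrableOn_Ioo_of_le zero_le_one).mp h.symm
  exact (hleft.const_mul a).add (hright.const_mul b)

noncomputable def dilogIntegrand (x : ℝ) : ℝ :=
  (1 / x) * ((1 / 2) * log (1 - x) ^ 2 + ∑' n, dilogTerm n x)

lemma continuousOn_dilogIntegrand : ContinuousOn dilogIntegrand (Ioo 0 1) := by
  have hT := continuousOn_tsum_dilogTerm.mono Ioo_subset_Icc_self
  refine ContinuousOn.mul ?_ (ContinuousOn.add ?_ hT)
  · exact continuousOn_const.div continuousOn_id fun x hx => hx.1.ne'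
  · refine ContinuousOn.mul continuousOn_const (ContinuousOn.pow ?_ 2)
    exact ContinuousOn.log (by fun_prop) fun x hx => by linarith [hx.2]

lemma norm_dilogIntegrand_le {x : ℝ} (hx : x ∈ Ioo 0 1) :
    ‖dilogIntegrand x‖ ≤
      (∑' n : ℕ, ((n : ℝ) + 1) ^ (-(3 / 2) : ℝ)) * x ^ (-(1 / 2) : ℝ) +
        8 * (1 - x) ^ (-(1 / 2) : ℝ) := by
  obtain ⟨hx0, hx1⟩ := hx
  set C := ∑' n : ℕ, ((n : ℝ) + 1) ^ (-(3 / 2) : ℝ)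
  set T := ∑' n, dilogTerm n x
  have hlog : log (1 - x) ^ 2 / x ≤ 16 * (1 - x) ^ (-(1 / 2) : ℝ) := by
    have := sq_log_one_sub_div_le hx0 hx1 (ε := 1 / 4) (by norm_num) (by norm_num)
    norm_num at this ⊢
    linarith
  have hT : ‖T‖ / x ≤ C * x ^ (-(1 / 2) : ℝ) := by
    have hsqrt : √x / x = x ^ (-(1 / 2) : ℝ) := by
      rw [sqrt_div_self, sqrt_eq_rpow, rpow_neg hx0.le]
    calc ‖T‖ / x ≤ √x * C / x := by gcongr; exact norm_tsum_dilogTerm_le hx0.le hx1.le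
      _ = C * x ^ (-(1 / 2) : ℝ) := by rw [← hsqrt]; ring
  calc ‖dilogIntegrand x‖ = (1 / x) * ‖(1 / 2) * log (1 - x) ^ 2 + T‖ := by
        rw [dilogIntegrand, norm_mul, Real.norm_of_nonneg (by positivity)]
    _ ≤ (1 / x) * ((1 / 2) * log (1 - x) ^ 2 + ‖T‖) := by
        gcongr
        exact (norm_add_le _ _).trans_eq (by rw [Real.norm_of_nonneg (by positivity)])
    _ = (1 / 2) * (log (1 - x) ^ 2 / x) + ‖T‖ / x := by ring
    _ ≤ (1 / 2) * (16 * (1 - x) ^ (-(1 / 2) : ℝ)) + C * x ^ (-(1 / 2) : ℝ) := by gcongr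
    _ = C * x ^ (-(1 / 2) : ℝ) + 8 * (1 - x) ^ (-(1 / 2) : ℝ) := by ring

theorem stmt_12 :
    IntegrableOn
      (fun x : ℝ => (1 / x) *
        ((1 / 2) * (Real.log (1 - x)) ^ 2 +
          ∑' n : ℕ, ((1 - x) ^ (n + 1) - 1) / ((n : ℝ) + 1) ^ 2))
      (Set.Ioo 0 1) := by
  change IntegrableOn dilogIntegrand (Ioo 0 1)
  refine (integrableOn_Ioo_rpow_add_one_sub_rpow (s := -(1 / 2)) (by norm_num)
    (∑' n : ℕ, ((n : ℝ) + 1) ^ (-(3 / 2) : ℝ)) 8).mono'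
    (continuousOn_dilogIntegrand.aestronglyMeasurable measurableSet_Ioo) ?_
  filter_upwards [ae_restrict_mem measurableSet_Ioo] with x hx
  exact norm_dilogIntegrand_le hx
end

section
/- For 0 < a < 1, ∫_0^1 ∫_0^a x/((1-x)(1-xy)) dx dy - ∫_a^1 ∫_0^{a/x} 1/((1-y)(1-xy)) dy dx = (1/2)·log²(1-a) - π²/6 + ∑_{n=1}^∞ (1-a)^n/n². -/
/-!
Integrating in `y` first (after Fubini for the first integral), the first double integral becomes
`∫₀ᵃ -log (1 - x) / (1 - x) dx = log² (1 - a) / 2`, and the inner integral of the second becomes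
`(log (1 - a) + log x - log (x - a)) / (1 - x)`. Since `Li₂' t = -log (1 - t) / t`, the latter is
the derivative of `Li₂ (1 - x) - Li₂ ((1 - x) / (1 - a))`, which vanishes at `x = 1` and equals
`Li₂ (1 - a) - π² / 6` at `x = a`.
-/

open MeasureTheory Set Real intervalIntegral

noncomputable def dilog (x : ℝ) : ℝ := ∑' n : ℕ, x ^ (n + 1) / ((n : ℝ) + 1) ^ 2

lemma summable_one_div_succ_sq : Summable fun n : ℕ => 1 / ((n : ℝ) + 1) ^ 2 := by
  have h : Summable fun n : ℕ => 1 / (n : ℝ) ^ 2 := Real.summable_one_div_nat_pow.2 one_lt_two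
  exact ((summable_nat_add_iff 1).2 h).congr fun n => by push_cast; ring

lemma norm_dilog_term_le {x : ℝ} (hx : |x| ≤ 1) (n : ℕ) :
    ‖x ^ (n + 1) / ((n : ℝ) + 1) ^ 2‖ ≤ 1 / ((n : ℝ) + 1) ^ 2 := by
  rw [norm_div, norm_pow, Real.norm_eq_abs, Real.norm_of_nonneg (by positivity)]
  gcongr
  exact pow_le_one₀ (abs_nonneg x) hx

lemma summable_dilog {x : ℝ} (hx : |x| ≤ 1) :
    Summable fun n : ℕ => x ^ (n + 1) / ((n : ℝ) + 1) ^ 2 :=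
  .of_norm_bounded summable_one_div_succ_sq (norm_dilog_term_le hx)

lemma continuousOn_dilog : ContinuousOn dilog (Icc (-1) 1) :=
  continuousOn_tsum (fun n => by fun_prop) summable_one_div_succ_sq
    fun n _ hx => norm_dilog_term_le (abs_le.2 hx) n

lemma dilog_one : dilog 1 = π ^ 2 / 6 := by
  have h := (hasSum_nat_add_iff' (f := fun n : ℕ => 1 / (n : ℝ) ^ 2) 1).2 hasSum_zeta_two
  simp only [Finset.range_one, Finset.sum_singleton, Nat.cast_zero] at h
  norm_num at h
  rw [dilog, ← h.tsum_eq]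
  exact tsum_congr fun n => by ring

lemma hasDerivAt_dilog_tsum {x : ℝ} (hx : |x| < 1) :
    HasDerivAt dilog (∑' n : ℕ, x ^ n / ((n : ℝ) + 1)) x := by
  set r := (1 + |x|) / 2
  have hr1 : r < 1 := by simp only [r]; linarith
  have hxr : x ∈ Metric.ball (0 : ℝ) r := by
    rw [Metric.mem_ball, dist_zero_right, Real.norm_eq_abs]; simp only [r]; linarith
  refine hasDerivAt_tsum_of_isPreconnected (u := fun n => r ^ n)
    (g := fun (n : ℕ) (y : ℝ) => y ^ (n + 1) / ((n : ℝ) + 1) ^ 2)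
    (g' := fun (n : ℕ) (y : ℝ) => y ^ n / ((n : ℝ) + 1))
    (summable_geometric_of_lt_one (by positivity) hr1) Metric.isOpen_ball
    (convex_ball 0 r).isPreconnected (fun n y _ => ?_) (fun n y hy => ?_) hxr
    (summable_dilog hx.le) hxr
  · refine ((hasDerivAt_pow (n + 1) y).div_const (((n : ℝ) + 1) ^ 2)).congr_deriv ?_
    have : (n : ℝ) + 1 ≠ 0 := by positivity
    push_cast
    field_simp
  · rw [Metric.mem_ball, dist_zero_right] at hy
    rw [norm_div, norm_pow, Real.norm_of_nonneg (by positivity : (0 : ℝ) ≤ n + 1)]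
    calc ‖y‖ ^ n / ((n : ℝ) + 1) ≤ ‖y‖ ^ n := div_le_self (by positivity) (by simp)
      _ ≤ r ^ n := by gcongr

lemma hasSum_pow_div_succ {x : ℝ} (hx : |x| < 1) (hx0 : x ≠ 0) :
    HasSum (fun n : ℕ => x ^ n / ((n : ℝ) + 1)) (-log (1 - x) / x) :=
  ((hasSum_pow_div_log_of_abs_lt_one hx).div_const x).congr_fun fun n => by
    field_simp
    ring

lemma hasDerivAt_dilog {x : ℝ} (hx : |x| < 1) (hx0 : x ≠ 0) :
    HasDerivAt dilog (-log (1 - x) / x) x := by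
  simpa only [(hasSum_pow_div_succ hx hx0).tsum_eq] using hasDerivAt_dilog_tsum hx

theorem intervalIntegral_integral_swap_of_continuousOn {E : Type*} [NormedAddCommGroup E]
    [NormedSpace ℝ E] {f : ℝ → ℝ → E} {a b c d : ℝ} (hab : a ≤ b) (hcd : c ≤ d)
    (hf : ContinuousOn (Function.uncurry f) (Icc a b ×ˢ Icc c d)) :
    ∫ x in a..b, ∫ y in c..d, f x y = ∫ y in c..d, ∫ x in a..b, f x y := by
  simp_rw [integral_of_le hab, integral_of_le hcd]
  apply integral_integral_swap
  rw [Measure.prod_restrict]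
  exact (hf.integrableOn_compact (isCompact_Icc.prod isCompact_Icc)).mono_set
    (prod_mono Ioc_subset_Icc_self Ioc_subset_Icc_self)

lemma integral_div_one_sub_mul {x : ℝ} (hx : x < 1) :
    ∫ y in (0 : ℝ)..1, x / ((1 - x) * (1 - x * y)) = -log (1 - x) / (1 - x) := by
  have hpos : ∀ y ∈ uIcc (0 : ℝ) 1, 0 < 1 - x * y := by
    intro y hy
    rw [uIcc_of_le zero_le_one] at hy
    rcases le_total x 0 with hx0 | hx0
    · nlinarith [hy.1]
    · nlinarith [hy.2]
  have hderiv : ∀ y ∈ uIcc (0 : ℝ) 1,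
      HasDerivAt (fun y => -log (1 - x * y) / (1 - x)) (x / ((1 - x) * (1 - x * y))) y := by
    intro y hy
    have h := (((hasDerivAt_id' y).const_mul x).const_sub 1).log (hpos y hy).ne'
    refine (h.neg.div_const (1 - x)).congr_deriv ?_
    have := (hpos y hy).ne'
    have : 1 - x ≠ 0 := by linarith
    field_simp
  have hcont : ContinuousOn (fun y => x / ((1 - x) * (1 - x * y))) (uIcc 0 1) :=
    continuousOn_const.div (by fun_prop) fun y hy =>
      mul_ne_zero (by linarith) (hpos y hy).ne'
  rw [integral_eq_sub_of_hasDerivAt hderiv hcont.intervalIntegrable]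
  simp

lemma integral_neg_log_one_sub_div {a : ℝ} (ha : a < 1) :
    ∫ x in (0 : ℝ)..a, -log (1 - x) / (1 - x) = log (1 - a) ^ 2 / 2 := by
  have hpos : ∀ x ∈ uIcc (0 : ℝ) a, 0 < 1 - x := fun x hx =>
    sub_pos.2 (hx.2.trans_lt (max_lt one_pos ha))
  have hderiv : ∀ x ∈ uIcc (0 : ℝ) a,
      HasDerivAt (fun x => log (1 - x) ^ 2 / 2) (-log (1 - x) / (1 - x)) x := by
    intro x hx
    have h := (((hasDerivAt_id' x).const_sub 1).log (hpos x hx).ne').pow 2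
    refine (h.div_const 2).congr_deriv ?_
    have := (hpos x hx).ne'
    field_simp
    ring
  have hcont : ContinuousOn (fun x => -log (1 - x) / (1 - x)) (uIcc 0 a) :=
    ((continuousOn_log.comp (by fun_prop) fun x hx => (hpos x hx).ne').neg).div (by fun_prop)
      fun x hx => (hpos x hx).ne'
  rw [integral_eq_sub_of_hasDerivAt hderiv hcont.intervalIntegrable]
  simp

lemma integral_integral_div_one_sub_mul {a : ℝ} (ha0 : 0 ≤ a) (ha1 : a < 1) :
    ∫ y in (0 : ℝ)..1, ∫ x in (0 : ℝ)..a, x / ((1 - x) * (1 - x * y)) = log (1 - a) ^ 2 / 2 := by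
  have hcont : ContinuousOn (Function.uncurry fun y x : ℝ => x / ((1 - x) * (1 - x * y)))
      (Icc 0 1 ×ˢ Icc 0 a) := by
    refine ContinuousOn.div (by fun_prop) (by fun_prop) ?_
    rintro ⟨y, x⟩ ⟨⟨hy0, hy1⟩, ⟨hx0, hxa⟩⟩
    exact mul_ne_zero (by linarith) (by nlinarith)
  rw [intervalIntegral_integral_swap_of_continuousOn zero_le_one ha0 hcont,
    integral_congr fun x hx => integral_div_one_sub_mul ((uIcc_of_le ha0 ▸ hx).2.trans_lt ha1)]
  exact integral_neg_log_one_sub_div ha1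

section SecondIntegral

variable {a x : ℝ}

lemma integral_one_div_one_sub_mul (ha0 : 0 ≤ a) (hax : a < x) (hx1 : x < 1) :
    ∫ y in (0 : ℝ)..(a / x), 1 / ((1 - y) * (1 - x * y)) =
      (log (1 - a) + log x - log (x - a)) / (1 - x) := by
  have hx0 : 0 < x := ha0.trans_lt hax
  have hpos : ∀ y ∈ uIcc 0 (a / x), 0 < 1 - y ∧ 0 < 1 - x * y := by
    intro y hy
    rw [uIcc_of_le (by positivity)] at hy
    have hxy : x * y ≤ a := by
      calc x * y ≤ x * (a / x) := by gcongr; exact hy.2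
        _ = a := by field_simp
    have : y < 1 := hy.2.trans_lt ((div_lt_one hx0).2 hax)
    constructor <;> linarith
  have hderiv : ∀ y ∈ uIcc 0 (a / x),
      HasDerivAt (fun y => (log (1 - x * y) - log (1 - y)) / (1 - x))
        (1 / ((1 - y) * (1 - x * y))) y := by
    intro y hy
    obtain ⟨h1, h2⟩ := hpos y hy
    have h := ((((hasDerivAt_id' y).const_mul x).const_sub 1).log h2.ne').sub
      (((hasDerivAt_id' y).const_sub 1).log h1.ne')
    refine (h.div_const (1 - x)).congr_deriv ?_
    have : 1 - x ≠ 0 := by linarith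
    field_simp
    ring
  have hcont : ContinuousOn (fun y => 1 / ((1 - y) * (1 - x * y))) (uIcc 0 (a / x)) :=
    continuousOn_const.div (by fun_prop) fun y hy =>
      mul_ne_zero (hpos y hy).1.ne' (hpos y hy).2.ne'
  have hxa : x * (a / x) = a := by field_simp
  have hsub : 1 - a / x = (x - a) / x := by field_simp
  rw [integral_eq_sub_of_hasDerivAt hderiv hcont.intervalIntegrable, hxa, hsub,
    log_div (by linarith) hx0.ne']
  simp
  ring

lemma log_one_sub_add_log_sub_log_sub_nonneg (ha0 : 0 ≤ a) (hax : a < x) (hx1 : x < 1) :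
    0 ≤ log (1 - a) + log x - log (x - a) := by
  have hx0 : 0 < x := ha0.trans_lt hax
  rw [← log_mul (by linarith) hx0.ne', sub_nonneg]
  exact log_le_log (by linarith) (by nlinarith)

lemma hasDerivAt_dilog_one_sub_sub (ha0 : 0 ≤ a) (hax : a < x) (hx1 : x < 1) :
    HasDerivAt (fun x => dilog (1 - x) - dilog ((1 - x) / (1 - a)))
      ((log (1 - a) + log x - log (x - a)) / (1 - x)) x := by
  have h1a : 0 < 1 - a := by linarith
  have ht : |1 - x| < 1 := by rw [abs_lt]; constructor <;> linarith
  have hs : |(1 - x) / (1 - a)| < 1 := by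
    rw [abs_lt, lt_div_iff₀ h1a, div_lt_one h1a]; constructor <;> linarith
  have hd := (hasDerivAt_id' x).const_sub 1
  have h := ((hasDerivAt_dilog ht (by linarith)).comp x hd).sub
    ((hasDerivAt_dilog hs (div_ne_zero (by linarith) h1a.ne')).comp x (hd.div_const (1 - a)))
  refine h.congr_deriv ?_
  have e1 : (1 : ℝ) - (1 - x) = x := by ring
  have e2 : 1 - (1 - x) / (1 - a) = (x - a) / (1 - a) := by field_simp; ring
  rw [e1, e2, log_div (by linarith) h1a.ne']
  have : 1 - x ≠ 0 := by linarith
  field_simp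
  ring

lemma integral_log_div_one_sub (ha0 : 0 ≤ a) (ha1 : a < 1) :
    ∫ x in a..1, (log (1 - a) + log x - log (x - a)) / (1 - x) = π ^ 2 / 6 - dilog (1 - a) := by
  have h1a : 0 < 1 - a := by linarith
  have hcont : ContinuousOn (fun x => dilog (1 - x) - dilog ((1 - x) / (1 - a))) (Icc a 1) := by
    refine (continuousOn_dilog.comp (by fun_prop) fun x hx => ?_).sub
      (continuousOn_dilog.comp (by fun_prop) fun x hx => ?_)
    · constructor <;> linarith [hx.1, hx.2]
    · exact ⟨by linarith [div_nonneg (sub_nonneg.2 hx.2) h1a.le],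
        (div_le_one h1a).2 (by linarith [hx.1])⟩
  have hderiv : ∀ x ∈ Ioo a 1, HasDerivAt (fun x => dilog (1 - x) - dilog ((1 - x) / (1 - a)))
      ((log (1 - a) + log x - log (x - a)) / (1 - x)) x :=
    fun x hx => hasDerivAt_dilog_one_sub_sub ha0 hx.1 hx.2
  -- a nonnegative derivative is integrable, although this one is unbounded near `x = 1`
  have hint : IntervalIntegrable (fun x => (log (1 - a) + log x - log (x - a)) / (1 - x))
      volume a 1 :=
    (intervalIntegrable_iff_integrableOn_Ioc_of_le ha1.le).2 <|
      integrableOn_deriv_of_nonneg hcont hderiv fun x hx =>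
        div_nonneg (log_one_sub_add_log_sub_log_sub_nonneg ha0 hx.1 hx.2) (by linarith [hx.2])
  rw [integral_eq_sub_of_hasDerivAt_of_le ha1.le hcont hderiv hint, div_self h1a.ne', dilog_one]
  simp

end SecondIntegral

theorem stmt_16 (a : ℝ) (ha : 0 < a) (ha1 : a < 1) :
    (∫ y in (0 : ℝ)..1, ∫ x in (0 : ℝ)..a, x / ((1 - x) * (1 - x * y))) -
      (∫ x in a..(1 : ℝ), ∫ y in (0 : ℝ)..(a / x), 1 / ((1 - y) * (1 - x * y))) =
      (1 / 2) * (Real.log (1 - a)) ^ 2 - Real.pi ^ 2 / 6 +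
        ∑' n : ℕ, (1 - a) ^ (n + 1) / ((n : ℝ) + 1) ^ 2 := by
  have hinner : ∫ x in a..1, ∫ y in (0 : ℝ)..(a / x), 1 / ((1 - y) * (1 - x * y)) =
      ∫ x in a..1, (log (1 - a) + log x - log (x - a)) / (1 - x) :=
    integral_congr_Ioo_of_le ha1.le fun x hx => integral_one_div_one_sub_mul ha.le hx.1 hx.2
  rw [integral_integral_div_one_sub_mul ha.le ha1, hinner, integral_log_div_one_sub ha.le ha1,
    dilog]
  ring
end

section
/- For Riesz's function F(x) = ∑_{n=1}^∞ (-1)^{n+1} x^n / ((n-1)!·ζ(2n)), one has F(x) = x·∑_{n=1}^∞ (μ(n)/n²)·exp(-x/n²) for all x > 0, where μ is the Möbius function and ζ the Riemann zeta function. -/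
/-!
Expand `1 / ζ(2n)` as the Dirichlet series `∑ μ(m) m^(-2n)` and `exp` as its power series. The
double series `∑_{n,m} (-1)^n z^(n+1) μ(m) / (n! m^(2n+2))` converges absolutely, being dominated
by `|z|^(n+1) / n! · 1 / m^2`, so the two orders of summation agree: summing over `n` first gives
`z μ(m) / m^2 · exp(-z / m^2)`, summing over `m` first gives Riesz's series.
-/

open ArithmeticFunction
open scoped ArithmeticFunction.Moebius Nat

theorem inv_riemannZeta_eq_tsum_moebius_div_cpow {s : ℂ} (hs : 1 < s.re) :
    (riemannZeta s)⁻¹ = ∑' m : ℕ, (μ (m + 1) : ℂ) / ((m + 1 : ℕ) : ℂ) ^ s := by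
  rw [← LSeries_one_eq_riemannZeta hs,
    inv_eq_of_mul_eq_one_right (LSeries_one_mul_Lseries_moebius hs), LSeries,
    (LSeriesSummable_moebius_iff.mpr hs).tsum_eq_zero_add]
  simp

theorem inv_riemannZeta_natCast_eq_tsum_moebius_div_pow {k : ℕ} (hk : 1 < k) :
    (riemannZeta k)⁻¹ = ∑' m : ℕ, (μ (m + 1) : ℂ) / ((m : ℂ) + 1) ^ k := by
  rw [inv_riemannZeta_eq_tsum_moebius_div_cpow (by simpa using hk)]
  simp [Complex.cpow_natCast]

theorem tsum_mul_exp_eq_tsum_tsum_mul_pow_div_factorial {ι : Type*} {a w : ι → ℂ}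
    (h : Summable fun i => ‖a i‖ * Real.exp ‖w i‖) :
    ∑' i, a i * Complex.exp (w i) = ∑' n : ℕ, (∑' i, a i * w i ^ n) / n ! := by
  have hexp (x : ℂ) : Complex.exp x = ∑' n : ℕ, x ^ n / n ! := by
    rw [Complex.exp_eq_exp_ℂ, NormedSpace.exp_eq_tsum_div]
  have hterm : Summable fun p : ι × ℕ => a p.1 * (w p.1 ^ p.2 / p.2 !) := by
    refine .of_norm <| (summable_prod_of_nonneg fun _ => norm_nonneg _).mpr ⟨fun i => ?_, ?_⟩
    · simpa using (Real.summable_pow_div_factorial ‖w i‖).mul_left ‖a i‖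
    · refine h.congr fun i => ?_
      rw [Real.exp_eq_exp_ℝ, NormedSpace.exp_eq_tsum_div, ← tsum_mul_left]
      simp
  calc ∑' i, a i * Complex.exp (w i) = ∑' (i) (n : ℕ), a i * (w i ^ n / n !) := by
        simp_rw [hexp, tsum_mul_left]
    _ = ∑' (n : ℕ) (i), a i * (w i ^ n / n !) := hterm.tsum_comm.symm
    _ = ∑' n : ℕ, (∑' i, a i * w i ^ n) / n ! := by
        simp_rw [mul_div_assoc', tsum_div_const]

theorem summable_norm_moebius_div_sq_mul_exp_norm (z : ℂ) :
    Summable fun m : ℕ =>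
      ‖(μ (m + 1) : ℂ) / ((m : ℂ) + 1) ^ 2‖ * Real.exp ‖-z / ((m : ℂ) + 1) ^ 2‖ := by
  have hsq : Summable fun m : ℕ => 1 / ((m : ℝ) + 1) ^ 2 := by
    exact_mod_cast (summable_nat_add_iff 1).mpr (Real.summable_one_div_nat_pow.mpr one_lt_two)
  refine .of_nonneg_of_le (fun _ => by positivity) (fun m => ?_) (hsq.mul_right (Real.exp ‖z‖))
  have hq : ‖((m : ℂ) + 1) ^ 2‖ = ((m : ℝ) + 1) ^ 2 := by norm_cast
  have hq_ge : 1 ≤ ((m : ℝ) + 1) ^ 2 := one_le_pow₀ (by linarith [m.cast_nonneg (α := ℝ)])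
  have hμ : ‖(μ (m + 1) : ℂ)‖ ≤ 1 := by
    rw [Complex.norm_intCast]; exact_mod_cast abs_moebius_le_one
  rw [norm_div, norm_div, norm_neg, hq]
  gcongr
  exact div_le_self (norm_nonneg z) hq_ge

theorem riesz_series_eq_tsum_moebius_mul_exp (z : ℂ) :
    ∑' n : ℕ, (-1 : ℂ) ^ n * z ^ (n + 1) / (n ! * riemannZeta (2 * (n + 1))) =
      z * ∑' m : ℕ,
        (μ (m + 1) : ℂ) / ((m : ℂ) + 1) ^ 2 * Complex.exp (-z / ((m : ℂ) + 1) ^ 2) := by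
  rw [← tsum_mul_left]
  simp_rw [← mul_assoc]
  rw [tsum_mul_exp_eq_tsum_tsum_mul_pow_div_factorial]
  · refine tsum_congr fun n => ?_
    have hζ := inv_riemannZeta_natCast_eq_tsum_moebius_div_pow (k := 2 * (n + 1)) (by omega)
    push_cast at hζ
    rw [mul_comm (n ! : ℂ), ← div_div, div_eq_mul_inv _ (riemannZeta _), hζ, ← tsum_mul_left]
    congr 1
    refine tsum_congr fun m => ?_
    have hq : ((m : ℂ) + 1) ^ 2 ≠ 0 := pow_ne_zero _ (Nat.cast_add_one_ne_zero m)
    rw [pow_mul, neg_div, neg_pow (z / _), div_pow]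
    field_simp
    ring
  · simpa [mul_assoc] using (summable_norm_moebius_div_sq_mul_exp_norm z).mul_left ‖z‖

theorem stmt_18_general (x : ℝ) :
    ∑' n : ℕ, (-1 : ℂ) ^ n * (x : ℂ) ^ (n + 1) /
        ((n.factorial : ℂ) * riemannZeta (2 * (n + 1))) =
      (x : ℂ) * ∑' n : ℕ,
        ((μ (n + 1) : ℂ) / ((n : ℂ) + 1) ^ 2) * Complex.exp (-(x : ℂ) / ((n : ℂ) + 1) ^ 2) :=
  riesz_series_eq_tsum_moebius_mul_exp x

theorem stmt_18 (x : ℝ) (hx : 0 < x) :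
    ∑' n : ℕ, (-1 : ℂ) ^ n * (x : ℂ) ^ (n + 1) /
        ((n.factorial : ℂ) * riemannZeta (2 * (n + 1))) =
      (x : ℂ) * ∑' n : ℕ,
        ((μ (n + 1) : ℂ) / ((n : ℂ) + 1) ^ 2) * Complex.exp (-(x : ℂ) / ((n : ℂ) + 1) ^ 2) :=
  stmt_18_general x
end
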